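/- (Local sparse domination step.) Let J be a dyadic cube, 𝒥(J) the stopping cubes defined by Σ_{J ⊇ I ⊇ L} |𝒰_J f_I|^2/|I| > λ⟨|𝒰_J f|⟩_J^2. Then for a.e. x, Σ_{L ∈ D(J)} |U^{1/p}(x) f_L|^2 1_L(x)/|L| ≤ λ ‖U^{1/p}(x)𝒰_J^{-1}‖^2 ⟨|𝒰_J f|⟩_J^2 1_J(x) + Σ_{Q ∈ 𝒥(J)} Σ_{L ∈ D(Q)} |U^{1/p}(x) f_L|^2 1_L(x)/|L|. -/
import Mathlib


open MeasureTheory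
open scoped ENNReal NNReal BigOperators ComplexOrder

noncomputable section

namespace Paper

/-- A dyadic cube in `ℝ^d`, encoded by its scale `k` (sidelength `2^k`) and position `m`. -/
structure DCube (d : ℕ) where
  k : ℤ
  m : Fin d → ℤ
deriving DecidableEq

/-- The underlying set of a dyadic cube. -/
def DCube.set {d : ℕ} (Q : DCube d) : Set (Fin d → ℝ) :=
  {x | ∀ i, (Q.m i : ℝ) * 2 ^ Q.k ≤ x i ∧ x i < ((Q.m i : ℝ) + 1) * 2 ^ Q.k}

/-- An axis-parallel (half-open) cube in `ℝ^d`. -/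
def IsCube (d : ℕ) (Q : Set (Fin d → ℝ)) : Prop :=
  ∃ (a : Fin d → ℝ) (h : ℝ), 0 < h ∧ Q = {x | ∀ i, a i ≤ x i ∧ x i < a i + h}

/-- Matrix acting on Euclidean space. -/
def mvec {n : ℕ} (A : Matrix (Fin n) (Fin n) ℂ) (v : EuclideanSpace ℂ (Fin n)) :
    EuclideanSpace ℂ (Fin n) :=
  (WithLp.equiv 2 (Fin n → ℂ)).symm (A.mulVec ((WithLp.equiv 2 (Fin n → ℂ)) v))

/-- Operator norm (`ℓ² → ℓ²`) of a matrix. -/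
def opNorm {n : ℕ} (A : Matrix (Fin n) (Fin n) ℂ) : ℝ :=
  ‖LinearMap.toContinuousLinearMap (Matrix.toEuclideanLin A)‖

/-- A Haar system adapted to the standard dyadic grid: supported on `Q`, mean zero,
orthonormal in `L²`, and constant on strict dyadic subcubes. -/
def IsHaarSystem (d : ℕ) (h : DCube d → Fin (2 ^ d - 1) → (Fin d → ℝ) → ℝ) : Prop :=
  (∀ Q j x, x ∉ Q.set → h Q j x = 0) ∧
  (∀ Q j, ∫ x in Q.set, h Q j x = 0) ∧
  (∀ Q j Q' j', ∫ x, h Q j x * h Q' j' x = if Q = Q' ∧ j = j' then 1 else 0) ∧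
  (∀ Q j (Q' : DCube d), Q'.set ⊂ Q.set → ∃ c : ℝ, ∀ x ∈ Q'.set, h Q j x = c)

/-- Haar coefficient of a vector-valued function. -/
def haarCoef {d n : ℕ} (h : DCube d → Fin (2 ^ d - 1) → (Fin d → ℝ) → ℝ)
    (f : (Fin d → ℝ) → EuclideanSpace ℂ (Fin n)) (Q : DCube d) (j : Fin (2 ^ d - 1)) :
    EuclideanSpace ℂ (Fin n) :=
  ∫ x in Q.set, ((h Q j x : ℂ) • f x)

/-- Haar coefficient of a scalar function. -/
def haarCoefR {d : ℕ} (h : DCube d → Fin (2 ^ d - 1) → (Fin d → ℝ) → ℝ)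
    (f : (Fin d → ℝ) → ℝ) (Q : DCube d) (j : Fin (2 ^ d - 1)) : ℝ :=
  ∫ x in Q.set, f x * h Q j x

/-- Lebesgue measure of a dyadic cube, as a real number. -/
def vol {d : ℕ} (Q : DCube d) : ℝ := (volume Q.set).toReal

/-- `M` is a reducing matrix for the weight with `p`-th root `W` on the set `I`,
with comparison constants `c, C`. -/
def IsReducingFor {d n : ℕ} (p : ℝ) (W : (Fin d → ℝ) → Matrix (Fin n) (Fin n) ℂ)
    (I : Set (Fin d → ℝ)) (M : Matrix (Fin n) (Fin n) ℂ) (c C : ℝ) : Prop :=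
  M.PosDef ∧ ∀ v : EuclideanSpace ℂ (Fin n),
    c * (⨍ x in I, ‖mvec (W x) v‖ ^ p) ^ (1 / p) ≤ ‖mvec M v‖ ∧
    ‖mvec M v‖ ≤ C * (⨍ x in I, ‖mvec (W x) v‖ ^ p) ^ (1 / p)

/-- A matrix weight, recorded via its `p`-th root `W = U^{1/p}`: entrywise measurable and
a.e. positive definite. -/
def IsMatrixWeight {d n : ℕ} (W : (Fin d → ℝ) → Matrix (Fin n) (Fin n) ℂ) : Prop :=
  (∀ i j, Measurable fun x => W x i j) ∧
  ∀ᵐ x ∂(volume : Measure (Fin d → ℝ)), (W x).PosDef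

/-- Two-weight matrix `A_p` characteristic `[U,V]_{A_p}`, expressed in terms of
`W = U^{1/p}` and `Z = V^{-1/p}`.  (Note `p/p' = p - 1`.) -/
def ApChar (d n : ℕ) (p : ℝ) (W Z : (Fin d → ℝ) → Matrix (Fin n) (Fin n) ℂ) : ℝ≥0∞ :=
  ⨆ I : {Q : Set (Fin d → ℝ) // IsCube d Q},
    ENNReal.ofReal (⨍ x in I.1, (⨍ y in I.1, opNorm (Z y * W x) ^ (p / (p - 1))) ^ (p - 1))

/-- Dyadic/cube maximal function (over all axis-parallel cubes containing `x`). -/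
def maximal (d : ℕ) (w : (Fin d → ℝ) → ℝ≥0∞) (x : Fin d → ℝ) : ℝ≥0∞ :=
  ⨆ I : {Q : Set (Fin d → ℝ) // IsCube d Q ∧ x ∈ Q}, (volume I.1)⁻¹ * ∫⁻ y in I.1, w y

/-- Fujii–Wilson `A_∞` characteristic of a scalar weight. -/
def AinfChar (d : ℕ) (w : (Fin d → ℝ) → ℝ≥0∞) : ℝ≥0∞ :=
  ⨆ I : {Q : Set (Fin d → ℝ) // IsCube d Q},
    (∫⁻ x in I.1, maximal d (I.1.indicator w) x) / ∫⁻ x in I.1, w x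

/-- Matrix `A_p^wk` characteristic of the weight with `p`-th root `W`:
`sup_e [ |W e|^p ]_{A_∞}`. -/
def ApWkChar (d n : ℕ) (p : ℝ) (W : (Fin d → ℝ) → Matrix (Fin n) (Fin n) ℂ) : ℝ≥0∞ :=
  ⨆ v : EuclideanSpace ℂ (Fin n),
    AinfChar d (fun x => ENNReal.ofReal (‖mvec (W x) v‖ ^ p))

/-- A sparse collection of dyadic cubes. -/
def IsSparse {d : ℕ} (𝓛 : Set (DCube d)) : Prop :=
  ∀ J ∈ 𝓛, volume (⋃ Q ∈ {Q ∈ 𝓛 | Q.set ⊂ J.set}, DCube.set Q) ≤ volume J.set / 2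

/-- Matrix-weighted `L^p` norm, with `Vr = V^{1/p}`. -/
def wNorm (d n : ℕ) (p : ℝ) (Vr : (Fin d → ℝ) → Matrix (Fin n) (Fin n) ℂ)
    (f : (Fin d → ℝ) → EuclideanSpace ℂ (Fin n)) : ℝ :=
  (∫ x, ‖mvec (Vr x) (f x)‖ ^ p) ^ (1 / p)

/-- Unweighted `L^p` norm of a scalar function. -/
def lpNorm (d : ℕ) (p : ℝ) (g : (Fin d → ℝ) → ℝ) : ℝ :=
  (∫ x, |g x| ^ p) ^ (1 / p)


/-- `Σ_{J ⊇ I ⊇ L} |𝒰_J f_I|² / |I|`. -/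
def stopSum {d n : ℕ} (h : DCube d → Fin (2 ^ d - 1) → (Fin d → ℝ) → ℝ)
    (f : (Fin d → ℝ) → EuclideanSpace ℂ (Fin n)) (M : Matrix (Fin n) (Fin n) ℂ)
    (J L : DCube d) : ℝ :=
  ∑' Ij : {I : DCube d // L.set ⊆ I.set ∧ I.set ⊆ J.set} × Fin (2 ^ d - 1),
    ‖mvec M (haarCoef h f Ij.1.1 Ij.2)‖ ^ 2 / vol Ij.1.1

/-- The stopping condition for subcubes of `J`. -/
def isStop {d n : ℕ} (h : DCube d → Fin (2 ^ d - 1) → (Fin d → ℝ) → ℝ)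
    (f : (Fin d → ℝ) → EuclideanSpace ℂ (Fin n)) (M : Matrix (Fin n) (Fin n) ℂ)
    (J : DCube d) (lam : ℝ) (L : DCube d) : Prop :=
  L.set ⊆ J.set ∧ lam * (⨍ x in J.set, ‖mvec M (f x)‖) ^ 2 < stopSum h f M J L

/-- `𝒥(J)`: the maximal stopping subcubes of `J`. -/
def stopFam {d n : ℕ} (h : DCube d → Fin (2 ^ d - 1) → (Fin d → ℝ) → ℝ)
    (f : (Fin d → ℝ) → EuclideanSpace ℂ (Fin n)) (M : Matrix (Fin n) (Fin n) ℂ)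
    (J : DCube d) (lam : ℝ) : Set (DCube d) :=
  {L | isStop h f M J lam L ∧
    ∀ L', isStop h f M J lam L' → L.set ⊆ L'.set → L'.set ⊆ L.set}

section Aux

lemma dcube_set_eq {d : ℕ} (Q : DCube d) :
    Q.set = Set.univ.pi (fun i => Set.Ico ((Q.m i:ℝ)*2^Q.k) (((Q.m i:ℝ)+1)*2^Q.k)) := by
  ext x; simp [DCube.set, Set.mem_pi, Set.mem_Ico]

lemma volume_dcube {d : ℕ} (Q : DCube d) :
    volume Q.set = ENNReal.ofReal ((2:ℝ)^Q.k) ^ d := by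
  rw [dcube_set_eq, volume_pi_pi]
  have he : ∀ i : Fin d, volume (Set.Ico ((Q.m i:ℝ)*2^Q.k) (((Q.m i:ℝ)+1)*2^Q.k))
      = ENNReal.ofReal ((2:ℝ)^Q.k) := by
    intro i
    rw [Real.volume_Ico]
    congr 1
    ring
  simp only [he, Finset.prod_const, Finset.card_univ, Fintype.card_fin]

lemma vol_eq {d : ℕ} (Q : DCube d) : vol Q = ((2:ℝ)^Q.k) ^ d := by
  rw [vol, volume_dcube, ENNReal.toReal_pow, ENNReal.toReal_ofReal (by positivity)]

lemma vol_pos {d : ℕ} (Q : DCube d) : 0 < vol Q := by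
  rw [vol_eq]; positivity

lemma dcube_nonempty {d : ℕ} (Q : DCube d) : Q.set.Nonempty := by
  refine ⟨fun i => (Q.m i : ℝ) * 2 ^ Q.k, fun i => ⟨le_refl _, ?_⟩⟩
  have h : (0:ℝ) < 2 ^ Q.k := by positivity
  show (Q.m i : ℝ) * 2 ^ Q.k < ((Q.m i : ℝ) + 1) * 2 ^ Q.k
  nlinarith

lemma k_le_of_subset {d : ℕ} (hd : 0 < d) {A B : DCube d} (hsub : A.set ⊆ B.set) :
    A.k ≤ B.k := by
  have hv : vol A ≤ vol B := by
    refine ENNReal.toReal_mono ?_ (measure_mono hsub)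
    rw [volume_dcube]
    exact ENNReal.pow_ne_top ENNReal.ofReal_ne_top
  rw [vol_eq, vol_eq] at hv
  have h2 : (2:ℝ)^A.k ≤ 2^B.k := by
    have := pow_le_pow_iff_left₀ (a := (2:ℝ)^A.k) (b := (2:ℝ)^B.k)
      (by positivity) (by positivity) hd.ne'
    exact this.mp hv
  exact ((zpow_right_strictMono₀ (by norm_num : (1:ℝ) < 2)).le_iff_le).mp h2

lemma nested {d : ℕ} {A B : DCube d} {x : Fin d → ℝ} (hAB : A.k ≤ B.k)
    (hx : x ∈ A.set) (hx' : x ∈ B.set) : A.set ⊆ B.set := by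
  intro y hy i
  obtain ⟨hA1, hA2⟩ := hx i
  obtain ⟨hB1, hB2⟩ := hx' i
  obtain ⟨hy1, hy2⟩ := hy i
  set t : ℕ := (B.k - A.k).toNat with ht
  have h2A : (0:ℝ) < 2 ^ A.k := by positivity
  have hBk : (2:ℝ) ^ B.k = ((2^t : ℤ) : ℝ) * 2 ^ A.k := by
    push_cast
    rw [← zpow_natCast (2:ℝ) t, ← zpow_add₀ (by norm_num : (2:ℝ) ≠ 0)]
    congr 1
    omega
  have key1 : B.m i * 2^t ≤ A.m i := by
    have h0 : (B.m i : ℝ) * ((2^t : ℤ) : ℝ) * 2 ^ A.k < ((A.m i : ℝ) + 1) * 2 ^ A.k := by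
      calc (B.m i : ℝ) * ((2^t : ℤ) : ℝ) * 2 ^ A.k = (B.m i : ℝ) * 2 ^ B.k := by
            rw [hBk]; ring
        _ ≤ x i := hB1
        _ < _ := hA2
    have h3 : (B.m i : ℝ) * ((2^t : ℤ) : ℝ) < (A.m i : ℝ) + 1 :=
      lt_of_mul_lt_mul_right (by linarith [h0]) h2A.le
    have h4 : ((B.m i * 2^t : ℤ) : ℝ) < ((A.m i + 1 : ℤ) : ℝ) := by
      push_cast
      push_cast at h3
      linarith
    have := Int.cast_lt.mp h4
    omega
  have key2 : A.m i + 1 ≤ (B.m i + 1) * 2^t := by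
    have h0 : (A.m i : ℝ) * 2 ^ A.k < ((B.m i : ℝ) + 1) * ((2^t : ℤ) : ℝ) * 2 ^ A.k := by
      calc (A.m i : ℝ) * 2 ^ A.k ≤ x i := hA1
        _ < ((B.m i : ℝ) + 1) * 2 ^ B.k := hB2
        _ = ((B.m i : ℝ) + 1) * ((2^t : ℤ) : ℝ) * 2 ^ A.k := by rw [hBk]; ring
    have h3 : (A.m i : ℝ) < ((B.m i : ℝ) + 1) * ((2^t : ℤ) : ℝ) :=
      lt_of_mul_lt_mul_right (by linarith [h0]) h2A.le
    have h4 : ((A.m i : ℤ) : ℝ) < (((B.m i + 1) * 2^t : ℤ) : ℝ) := by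
      push_cast
      push_cast at h3
      linarith
    have := Int.cast_lt.mp h4
    omega
  have c1 : ((B.m i * 2^t : ℤ):ℝ) ≤ ((A.m i : ℤ):ℝ) := Int.cast_le.mpr key1
  have c2 : ((A.m i + 1:ℤ):ℝ) ≤ (((B.m i+1)*2^t : ℤ):ℝ) := Int.cast_le.mpr key2
  push_cast at c1 c2
  constructor
  · rw [hBk]
    push_cast
    nlinarith [mul_le_mul_of_nonneg_right c1 h2A.le]
  · rw [hBk]
    push_cast
    nlinarith [mul_le_mul_of_nonneg_right c2 h2A.le]

lemma eq_of_same_scale {d : ℕ} {A B : DCube d} {x : Fin d → ℝ} (hk : A.k = B.k)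
    (hx : x ∈ A.set) (hx' : x ∈ B.set) : A = B := by
  cases A with | mk ka ma =>
  cases B with | mk kb mb =>
  simp only at hk
  subst hk
  suffices h : ma = mb by rw [h]
  funext i
  obtain ⟨hA1, hA2⟩ := hx i
  obtain ⟨hB1, hB2⟩ := hx' i
  simp only at hA1 hA2 hB1 hB2
  have h2 : (0:ℝ) < 2 ^ ka := by positivity
  have h3 : (ma i : ℝ) < mb i + 1 := lt_of_mul_lt_mul_right (by nlinarith) h2.le
  have h4 : (mb i : ℝ) < ma i + 1 := lt_of_mul_lt_mul_right (by nlinarith) h2.le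
  have h3' : ma i < mb i + 1 := by exact_mod_cast h3
  have h4' : mb i < ma i + 1 := by exact_mod_cast h4
  omega

lemma eq_of_set_eq {d : ℕ} (hd : 0 < d) {A B : DCube d} (h : A.set = B.set) : A = B := by
  have hk : A.k = B.k := le_antisymm (k_le_of_subset hd h.le) (k_le_of_subset hd h.ge)
  obtain ⟨x, hx⟩ := dcube_nonempty A
  exact eq_of_same_scale hk hx (h ▸ hx)

lemma finite_between {d : ℕ} (hd : 0 < d) (L J : DCube d) :
    {I : DCube d | L.set ⊆ I.set ∧ I.set ⊆ J.set}.Finite := by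
  obtain ⟨x, hx⟩ := dcube_nonempty L
  apply Set.Finite.of_finite_image (f := DCube.k)
  · apply (Set.finite_Icc L.k J.k).subset
    rintro _ ⟨I, ⟨h1, h2⟩, rfl⟩
    exact ⟨k_le_of_subset hd h1, k_le_of_subset hd h2⟩
  · rintro I ⟨h1, _⟩ I' ⟨h1', _⟩ hk
    exact eq_of_same_scale hk (h1 hx) (h1' hx)

lemma mvec_eq' {n : ℕ} (A : Matrix (Fin n) (Fin n) ℂ) (v : EuclideanSpace ℂ (Fin n)) :
    mvec A v = Matrix.toEuclideanLin A v := rfl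

lemma norm_mvec_le {n : ℕ} (A : Matrix (Fin n) (Fin n) ℂ) (v : EuclideanSpace ℂ (Fin n)) :
    ‖mvec A v‖ ≤ opNorm A * ‖v‖ := by
  have h := (LinearMap.toContinuousLinearMap (Matrix.toEuclideanLin A)).le_opNorm v
  have h2 : (LinearMap.toContinuousLinearMap (Matrix.toEuclideanLin A)) v = mvec A v := rfl
  rw [h2] at h
  exact h

lemma mvec_mul {n : ℕ} (A B : Matrix (Fin n) (Fin n) ℂ) (v : EuclideanSpace ℂ (Fin n)) :
    mvec (A * B) v = mvec A (mvec B v) := by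
  simp [mvec, Matrix.mulVec_mulVec]

lemma mvec_cancel {n : ℕ} {M : Matrix (Fin n) (Fin n) ℂ} (hM : M.PosDef)
    (v : EuclideanSpace ℂ (Fin n)) : mvec M⁻¹ (mvec M v) = v := by
  rw [← mvec_mul, Matrix.nonsing_inv_mul M (Matrix.isUnit_iff_isUnit_det M |>.mp hM.isUnit)]
  simp [mvec, Matrix.one_mulVec]

lemma norm_mvec_factor {n : ℕ} {A M : Matrix (Fin n) (Fin n) ℂ} (hM : M.PosDef)
    (v : EuclideanSpace ℂ (Fin n)) : ‖mvec A v‖ ≤ opNorm (A * M⁻¹) * ‖mvec M v‖ := by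
  have h1 : mvec A v = mvec (A * M⁻¹) (mvec M v) := by
    rw [mvec_mul, mvec_cancel hM]
  rw [h1]
  exact norm_mvec_le _ _

lemma stopFam_unique {d n : ℕ} (hd : 0 < d)
    {h : DCube d → Fin (2 ^ d - 1) → (Fin d → ℝ) → ℝ}
    {f : (Fin d → ℝ) → EuclideanSpace ℂ (Fin n)} {M : Matrix (Fin n) (Fin n) ℂ}
    {J : DCube d} {lam : ℝ} {Q Q' : DCube d}
    (hQ : Q ∈ stopFam h f M J lam) (hQ' : Q' ∈ stopFam h f M J lam)
    {y : Fin d → ℝ} (hy : y ∈ Q.set) (hy' : y ∈ Q'.set) : Q = Q' := by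
  rcases le_total Q.k Q'.k with hk | hk
  · have hsub : Q.set ⊆ Q'.set := nested hk hy hy'
    have hsub' : Q'.set ⊆ Q.set := hQ.2 Q' hQ'.1 hsub
    exact eq_of_set_eq hd (Set.Subset.antisymm hsub hsub')
  · have hsub : Q'.set ⊆ Q.set := nested hk hy' hy
    have hsub' : Q.set ⊆ Q'.set := hQ'.2 Q hQ.1 hsub
    exact eq_of_set_eq hd (Set.Subset.antisymm hsub' hsub)

set_option maxHeartbeats 2000000 in
lemma pointwise_step {d n : ℕ} (hd : 0 < d)
    (h : DCube d → Fin (2 ^ d - 1) → (Fin d → ℝ) → ℝ)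
    (W : (Fin d → ℝ) → Matrix (Fin n) (Fin n) ℂ)
    (J : DCube d) (M : Matrix (Fin n) (Fin n) ℂ) (hM : M.PosDef)
    (f : (Fin d → ℝ) → EuclideanSpace ℂ (Fin n))
    (lam : ℝ) (hlam : 0 ≤ lam) (x : Fin d → ℝ) :
    (∑' Lj : {L : DCube d // L.set ⊆ J.set} × Fin (2 ^ d - 1),
        ‖mvec (W x) (haarCoef h f Lj.1.1 Lj.2)‖ ^ 2 *
          Lj.1.1.set.indicator (fun _ => (1 : ℝ)) x / vol Lj.1.1) ≤
      lam * opNorm (W x * M⁻¹) ^ 2 * (⨍ y in J.set, ‖mvec M (f y)‖) ^ 2 *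
          J.set.indicator (fun _ => (1 : ℝ)) x +
        ∑' Q : stopFam h f M J lam,
          ∑' Lj : {L : DCube d // L.set ⊆ Q.1.set} × Fin (2 ^ d - 1),
            ‖mvec (W x) (haarCoef h f Lj.1.1 Lj.2)‖ ^ 2 *
              Lj.1.1.set.indicator (fun _ => (1 : ℝ)) x / vol Lj.1.1 := by
  classical
  set tm : DCube d → Fin (2 ^ d - 1) → ℝ := fun L j =>
    ‖mvec (W x) (haarCoef h f L j)‖ ^ 2 * L.set.indicator (fun _ => (1:ℝ)) x / vol L with htm
  have tm_nonneg : ∀ L j, 0 ≤ tm L j := by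
    intro L j
    apply div_nonneg _ (vol_pos L).le
    exact mul_nonneg (by positivity) (Set.indicator_nonneg (fun _ _ => zero_le_one) x)
  have tm_zero : ∀ L j, x ∉ L.set → tm L j = 0 := by
    intro L j hx
    simp only [htm, Set.indicator_of_notMem hx, mul_zero, zero_div]
  show (∑' Lj : {L : DCube d // L.set ⊆ J.set} × Fin (2 ^ d - 1), tm Lj.1.1 Lj.2) ≤
      lam * opNorm (W x * M⁻¹) ^ 2 * (⨍ y in J.set, ‖mvec M (f y)‖) ^ 2 *
          J.set.indicator (fun _ => (1 : ℝ)) x +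
        ∑' Q : stopFam h f M J lam,
          ∑' Lj : {L : DCube d // L.set ⊆ Q.1.set} × Fin (2 ^ d - 1), tm Lj.1.1 Lj.2
  set S1 : ℝ := lam * opNorm (W x * M⁻¹) ^ 2 * (⨍ y in J.set, ‖mvec M (f y)‖) ^ 2 *
      J.set.indicator (fun _ => (1 : ℝ)) x with hS1
  set T2 : ℝ := ∑' Q : stopFam h f M J lam,
      ∑' Lj : {L : DCube d // L.set ⊆ Q.1.set} × Fin (2 ^ d - 1), tm Lj.1.1 Lj.2 with hT2
  have hS1nonneg : 0 ≤ S1 := by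
    rw [hS1]
    exact mul_nonneg (mul_nonneg (mul_nonneg hlam (sq_nonneg _)) (sq_nonneg _))
      (Set.indicator_nonneg (fun _ _ => zero_le_one) x)
  have hT2nonneg : 0 ≤ T2 := by
    rw [hT2]
    exact tsum_nonneg (fun Q => tsum_nonneg (fun Lj => tm_nonneg _ _))
  by_cases hsum : Summable (fun Lj : {L : DCube d // L.set ⊆ J.set} × Fin (2 ^ d - 1) =>
      tm Lj.1.1 Lj.2)
  · apply Summable.tsum_le_of_sum_le hsum
    intro F
    set P : {L : DCube d // L.set ⊆ J.set} × Fin (2 ^ d - 1) → Prop :=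
      fun Lj => ∃ Q ∈ stopFam h f M J lam, Lj.1.1.set ⊆ Q.set with hP
    have hbound2 : (∑ p ∈ F.filter P, tm p.1.1 p.2) ≤ T2 := by
      by_cases hx0 : ∃ Q₀ ∈ stopFam h f M J lam, x ∈ Q₀.set
      · obtain ⟨Q₀, hQ₀, hxQ₀⟩ := hx0
        have hQ₀J : Q₀.set ⊆ J.set := hQ₀.1.1
        set F2' := (F.filter P).filter (fun p => x ∈ p.1.1.set) with hF2'
        have hsub2 : (∑ p ∈ F.filter P, tm p.1.1 p.2) = ∑ p ∈ F2', tm p.1.1 p.2 := by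
          refine (Finset.sum_subset (Finset.filter_subset _ _) ?_).symm
          intro q hq hnq
          exact tm_zero _ _ (fun hxq => hnq (Finset.mem_filter.mpr ⟨hq, hxq⟩))
        rw [hsub2]
        have hsubQ₀ : ∀ q ∈ F2', q.1.1.set ⊆ Q₀.set := by
          intro q hq
          obtain ⟨hqF2, hxq⟩ := Finset.mem_filter.mp hq
          obtain ⟨Q, hQ, hLQ⟩ := (Finset.mem_filter.mp hqF2).2
          have hQQ₀ : Q = Q₀ := stopFam_unique hd hQ hQ₀ (hLQ hxq) hxQ₀
          exact hQQ₀ ▸ hLQ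
        have hgsum : Summable (fun Lj : {L : DCube d // L.set ⊆ Q₀.set} × Fin (2 ^ d - 1) =>
            tm Lj.1.1 Lj.2) := by
          have hinj : Function.Injective
              (fun Lj : {L : DCube d // L.set ⊆ Q₀.set} × Fin (2 ^ d - 1) =>
                ((⟨Lj.1.1, Lj.1.2.trans hQ₀J⟩ : {L : DCube d // L.set ⊆ J.set}), Lj.2)) := by
            intro a b hab
            obtain ⟨⟨a1, ha⟩, aj⟩ := a
            obtain ⟨⟨b1, hb⟩, bj⟩ := b
            simp only [Prod.mk.injEq, Subtype.mk.injEq] at hab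
            obtain ⟨h1, h2⟩ := hab
            subst h1; subst h2; rfl
          exact (hsum.comp_injective hinj).congr (fun Lj => rfl)
        have hle1 : (∑ q ∈ F2', tm q.1.1 q.2) ≤
            ∑' Lj : {L : DCube d // L.set ⊆ Q₀.set} × Fin (2 ^ d - 1), tm Lj.1.1 Lj.2 := by
          rw [← Finset.sum_attach F2' (fun q => tm q.1.1 q.2)]
          set ψ : {q // q ∈ F2'} → {L : DCube d // L.set ⊆ Q₀.set} × Fin (2 ^ d - 1) :=
            fun q => (⟨q.1.1.1, hsubQ₀ q.1 q.2⟩, q.1.2) with hψ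
          have hrw : (∑ q ∈ F2'.attach, tm q.1.1.1 q.1.2)
              = ∑ r ∈ F2'.attach.image ψ, tm r.1.1 r.2 := by
            rw [Finset.sum_image]
            intro a _ b _ hab
            obtain ⟨⟨⟨a1, ha1⟩, aj⟩, hma⟩ := a
            obtain ⟨⟨⟨b1, hb1⟩, bj⟩, hmb⟩ := b
            simp only [hψ, Prod.mk.injEq, Subtype.mk.injEq] at hab
            obtain ⟨h1, h2⟩ := hab
            subst h1; subst h2; rfl
          rw [hrw]
          exact Summable.sum_le_tsum _ (fun i _ => tm_nonneg _ _) hgsum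
        refine hle1.trans ?_
        rw [hT2]
        have hgen0 : ∀ Q : stopFam h f M J lam,
            Q ∉ ({(⟨Q₀, hQ₀⟩ : stopFam h f M J lam)} : Finset (stopFam h f M J lam)) →
            (∑' Lj : {L : DCube d // L.set ⊆ Q.1.set} × Fin (2 ^ d - 1), tm Lj.1.1 Lj.2) = 0 := by
          intro Q hQne
          have hxQ : x ∉ Q.1.set := by
            intro hxQ
            exact hQne (Finset.mem_singleton.mpr
              (Subtype.ext (stopFam_unique hd Q.2 hQ₀ hxQ hxQ₀)))
          have hz : ∀ Lj : {L : DCube d // L.set ⊆ Q.1.set} × Fin (2 ^ d - 1),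
              tm Lj.1.1 Lj.2 = 0 :=
            fun Lj => tm_zero _ _ (fun hxL => hxQ (Lj.1.2 hxL))
          calc (∑' Lj : {L : DCube d // L.set ⊆ Q.1.set} × Fin (2 ^ d - 1), tm Lj.1.1 Lj.2)
              = ∑' _ : {L : DCube d // L.set ⊆ Q.1.set} × Fin (2 ^ d - 1), (0:ℝ) :=
                tsum_congr hz
            _ = 0 := tsum_zero
        have hgensum : Summable (fun Q : stopFam h f M J lam =>
            ∑' Lj : {L : DCube d // L.set ⊆ Q.1.set} × Fin (2 ^ d - 1), tm Lj.1.1 Lj.2) :=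
          summable_of_ne_finset_zero hgen0
        exact Summable.le_tsum hgensum ⟨Q₀, hQ₀⟩ (fun Q _ => tsum_nonneg (fun Lj => tm_nonneg _ _))
      · push_neg at hx0
        have hz : ∀ q ∈ F.filter P, tm q.1.1 q.2 = 0 := by
          intro q hq
          obtain ⟨Q, hQ, hLQ⟩ := (Finset.mem_filter.mp hq).2
          exact tm_zero _ _ (fun hxq => hx0 Q hQ (hLQ hxq))
        rw [Finset.sum_congr rfl hz, Finset.sum_const_zero]
        exact hT2nonneg
    have hbound1 : (∑ p ∈ F.filter (fun q => ¬ P q), tm p.1.1 p.2) ≤ S1 := by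
      set F1' := (F.filter (fun q => ¬ P q)).filter (fun q => x ∈ q.1.1.set) with hF1'
      have hsub1 : (∑ p ∈ F.filter (fun q => ¬ P q), tm p.1.1 p.2)
          = ∑ p ∈ F1', tm p.1.1 p.2 := by
        refine (Finset.sum_subset (Finset.filter_subset _ _) ?_).symm
        intro q hq hnq
        exact tm_zero _ _ (fun hxq => hnq (Finset.mem_filter.mpr ⟨hq, hxq⟩))
      rw [hsub1]
      rcases F1'.eq_empty_or_nonempty with hne | hne
      · rw [hne, Finset.sum_empty]
        exact hS1nonneg
      · obtain ⟨p₀, hp₀, hmin⟩ := F1'.exists_min_image (fun q => q.1.1.k) hne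
        have hxL₀ : x ∈ p₀.1.1.set := (Finset.mem_filter.mp hp₀).2
        have hL₀J : p₀.1.1.set ⊆ J.set := p₀.1.2
        have hxJ : x ∈ J.set := hL₀J hxL₀
        have hnP₀ : ¬ P p₀ := (Finset.mem_filter.mp (Finset.mem_filter.mp hp₀).1).2
        have hnotstop : ¬ isStop h f M J lam p₀.1.1 := by
          intro hstop
          have hTfin : {L' : DCube d | isStop h f M J lam L' ∧ p₀.1.1.set ⊆ L'.set}.Finite :=
            (finite_between hd p₀.1.1 J).subset (fun L' hL' => ⟨hL'.2, hL'.1.1⟩)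
          have hTne : hTfin.toFinset.Nonempty := by
            rw [Set.Finite.toFinset_nonempty]
            exact ⟨p₀.1.1, hstop, subset_rfl⟩
          obtain ⟨Qm, hQmmem, hmax⟩ := hTfin.toFinset.exists_max_image (fun L => L.k) hTne
          rw [Set.Finite.mem_toFinset] at hQmmem
          obtain ⟨hQmstop, hQmL₀⟩ := hQmmem
          have hQmFam : Qm ∈ stopFam h f M J lam := by
            refine ⟨hQmstop, ?_⟩
            intro L' hL' hsub
            have hL'T : L' ∈ hTfin.toFinset := by
              rw [Set.Finite.mem_toFinset]
              exact ⟨hL', hQmL₀.trans hsub⟩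
            have hk : L'.k ≤ Qm.k := hmax L' hL'T
            obtain ⟨y, hy⟩ := dcube_nonempty Qm
            exact nested hk (hsub hy) hy
          exact hnP₀ ⟨Qm, hQmFam, hQmL₀⟩
        have hss : stopSum h f M J p₀.1.1 ≤ lam * (⨍ y in J.set, ‖mvec M (f y)‖) ^ 2 :=
          not_lt.mp (fun hlt => hnotstop ⟨hL₀J, hlt⟩)
        have hpt : ∀ q ∈ F1', tm q.1.1 q.2 ≤
            opNorm (W x * M⁻¹) ^ 2 * (‖mvec M (haarCoef h f q.1.1 q.2)‖ ^ 2 / vol q.1.1) := by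
          intro q hq
          have hxq : x ∈ q.1.1.set := (Finset.mem_filter.mp hq).2
          have hab : ‖mvec (W x) (haarCoef h f q.1.1 q.2)‖ ^ 2 ≤
              opNorm (W x * M⁻¹) ^ 2 * ‖mvec M (haarCoef h f q.1.1 q.2)‖ ^ 2 := by
            have h1 := norm_mvec_factor (A := W x) hM (haarCoef h f q.1.1 q.2)
            calc ‖mvec (W x) (haarCoef h f q.1.1 q.2)‖ ^ 2
                ≤ (opNorm (W x * M⁻¹) * ‖mvec M (haarCoef h f q.1.1 q.2)‖) ^ 2 :=
                  pow_le_pow_left₀ (norm_nonneg _) h1 2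
              _ = opNorm (W x * M⁻¹) ^ 2 * ‖mvec M (haarCoef h f q.1.1 q.2)‖ ^ 2 := by ring
          simp only [htm, Set.indicator_of_mem hxq, mul_one]
          rw [← mul_div_assoc]
          exact div_le_div_of_nonneg_right hab (vol_pos _).le
        have hchain : (∑ q ∈ F1', ‖mvec M (haarCoef h f q.1.1 q.2)‖ ^ 2 / vol q.1.1)
            ≤ stopSum h f M J p₀.1.1 := by
          have hL0 : ∀ q ∈ F1', p₀.1.1.set ⊆ q.1.1.set := by
            intro q hq
            exact nested (hmin q hq) hxL₀ (Finset.mem_filter.mp hq).2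
          haveI : Finite {I : DCube d // p₀.1.1.set ⊆ I.set ∧ I.set ⊆ J.set} :=
            (finite_between hd p₀.1.1 J).to_subtype
          haveI : Fintype ({I : DCube d // p₀.1.1.set ⊆ I.set ∧ I.set ⊆ J.set} ×
              Fin (2 ^ d - 1)) := Fintype.ofFinite _
          rw [stopSum, tsum_fintype]
          rw [← Finset.sum_attach F1' (fun q => ‖mvec M (haarCoef h f q.1.1 q.2)‖ ^ 2 / vol q.1.1)]
          set ψ : {q // q ∈ F1'} →
              {I : DCube d // p₀.1.1.set ⊆ I.set ∧ I.set ⊆ J.set} × Fin (2 ^ d - 1) :=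
            fun q => (⟨q.1.1.1, hL0 q.1 q.2, q.1.1.2⟩, q.1.2) with hψ
          have hrw : (∑ q ∈ F1'.attach, ‖mvec M (haarCoef h f q.1.1.1 q.1.2)‖ ^ 2 / vol q.1.1.1)
              = ∑ r ∈ F1'.attach.image ψ, ‖mvec M (haarCoef h f r.1.1 r.2)‖ ^ 2 / vol r.1.1 := by
            rw [Finset.sum_image]
            intro a _ b _ hab
            obtain ⟨⟨⟨a1, ha1⟩, aj⟩, hma⟩ := a
            obtain ⟨⟨⟨b1, hb1⟩, bj⟩, hmb⟩ := b
            simp only [hψ, Prod.mk.injEq, Subtype.mk.injEq] at hab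
            obtain ⟨h1, h2⟩ := hab
            subst h1; subst h2; rfl
          rw [hrw]
          apply Finset.sum_le_sum_of_subset_of_nonneg (Finset.subset_univ _)
          intro r _ _
          exact div_nonneg (by positivity) (vol_pos _).le
        calc (∑ q ∈ F1', tm q.1.1 q.2)
            ≤ ∑ q ∈ F1', opNorm (W x * M⁻¹) ^ 2 *
                (‖mvec M (haarCoef h f q.1.1 q.2)‖ ^ 2 / vol q.1.1) := Finset.sum_le_sum hpt
          _ = opNorm (W x * M⁻¹) ^ 2 *
                ∑ q ∈ F1', ‖mvec M (haarCoef h f q.1.1 q.2)‖ ^ 2 / vol q.1.1 :=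
              (Finset.mul_sum _ _ _).symm
          _ ≤ opNorm (W x * M⁻¹) ^ 2 * stopSum h f M J p₀.1.1 :=
              mul_le_mul_of_nonneg_left hchain (sq_nonneg _)
          _ ≤ opNorm (W x * M⁻¹) ^ 2 * (lam * (⨍ y in J.set, ‖mvec M (f y)‖) ^ 2) :=
              mul_le_mul_of_nonneg_left hss (sq_nonneg _)
          _ = S1 := by
              rw [hS1, Set.indicator_of_mem hxJ]
              ring
    calc (∑ p ∈ F, tm p.1.1 p.2)
        = (∑ p ∈ F.filter P, tm p.1.1 p.2) +
            ∑ p ∈ F.filter (fun q => ¬ P q), tm p.1.1 p.2 :=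
          (Finset.sum_filter_add_sum_filter_not F P _).symm
      _ ≤ T2 + S1 := add_le_add hbound2 hbound1
      _ = S1 + T2 := add_comm _ _
  · rw [tsum_eq_zero_of_not_summable hsum]
    exact add_nonneg hS1nonneg hT2nonneg

end Aux

/-- Local sparse domination step. -/
theorem stmt7 (d n : ℕ) (p : ℝ) (hp : 1 < p) (c₀ C₀ : ℝ) (hc₀ : 0 < c₀) (hC₀ : 0 < C₀)
    (h : DCube d → Fin (2 ^ d - 1) → (Fin d → ℝ) → ℝ) (hh : IsHaarSystem d h)
    (W : (Fin d → ℝ) → Matrix (Fin n) (Fin n) ℂ) (hW : IsMatrixWeight W)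
    (J : DCube d) (M : Matrix (Fin n) (Fin n) ℂ) (hM : IsReducingFor p W J.set M c₀ C₀)
    (f : (Fin d → ℝ) → EuclideanSpace ℂ (Fin n)) (hf : LocallyIntegrable f volume)
    (lam : ℝ) (hlam : 0 < lam) :
    ∀ᵐ x ∂(volume : Measure (Fin d → ℝ)),
      (∑' Lj : {L : DCube d // L.set ⊆ J.set} × Fin (2 ^ d - 1),
          ‖mvec (W x) (haarCoef h f Lj.1.1 Lj.2)‖ ^ 2 *
            Lj.1.1.set.indicator (fun _ => (1 : ℝ)) x / vol Lj.1.1) ≤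
        lam * opNorm (W x * M⁻¹) ^ 2 * (⨍ y in J.set, ‖mvec M (f y)‖) ^ 2 *
            J.set.indicator (fun _ => (1 : ℝ)) x +
          ∑' Q : stopFam h f M J lam,
            ∑' Lj : {L : DCube d // L.set ⊆ Q.1.set} × Fin (2 ^ d - 1),
              ‖mvec (W x) (haarCoef h f Lj.1.1 Lj.2)‖ ^ 2 *
                Lj.1.1.set.indicator (fun _ => (1 : ℝ)) x / vol Lj.1.1 := by
  rcases Nat.eq_zero_or_pos d with hd | hd
  · subst hd
    refine Filter.Eventually.of_forall (fun x => ?_)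
    haveI : IsEmpty (Fin (2 ^ 0 - 1)) := by
      rw [show (2 ^ 0 - 1 : ℕ) = 0 from rfl]
      infer_instance
    rw [tsum_empty]
    have h2 : (∑' Q : stopFam h f M J lam,
        ∑' Lj : {L : DCube 0 // L.set ⊆ Q.1.set} × Fin (2 ^ 0 - 1),
          ‖mvec (W x) (haarCoef h f Lj.1.1 Lj.2)‖ ^ 2 *
            Lj.1.1.set.indicator (fun _ => (1 : ℝ)) x / vol Lj.1.1) = 0 := by
      have hz : ∀ Q : stopFam h f M J lam,
          (∑' Lj : {L : DCube 0 // L.set ⊆ Q.1.set} × Fin (2 ^ 0 - 1),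
            ‖mvec (W x) (haarCoef h f Lj.1.1 Lj.2)‖ ^ 2 *
              Lj.1.1.set.indicator (fun _ => (1 : ℝ)) x / vol Lj.1.1) = 0 :=
        fun Q => tsum_empty
      rw [tsum_congr hz, tsum_zero]
    rw [h2, add_zero]
    exact mul_nonneg (mul_nonneg (mul_nonneg hlam.le (sq_nonneg _)) (sq_nonneg _))
      (Set.indicator_nonneg (fun _ _ => zero_le_one) x)
  · exact Filter.Eventually.of_forall (fun x => pointwise_step hd h W J M hM.1 f lam hlam.le x)


end Paper
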